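/- arXiv:math/9911176 — 8 statements merged into one kernel-verified Lean document; each statement's English description precedes it below -/
import Mathlib

section
/- For real numbers s, t_1, ..., t_r with r > 1, the 2^r × 2^r matrix A(s; t_1,...,t_r) defined below satisfies det A(s; t_1,...,t_r) = (s^2 - (t_1 + ... + t_r))^{2^{r-1}}. -/
/-- The matrix `A(s; t_1,...,t_r)` of the paper: rows and columns are indexed by
binary sequences `l : Fin r → Bool`.  Diagonal entries are `s`; if `l'` differs
from `l` exactly at position `i`, the entry is `-(-1)^{l_{i+1}+⋯+l_r} t_i` when
`l_i = 0` and `(-1)^{l_i+⋯+l_r} (= -(-1)^{l_{i+1}+⋯+l_r})` when `l_i = 1`;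
all other entries vanish. -/
def Amat (r : ℕ) {R : Type*} [CommRing R] (s : R) (t : Fin r → R) :
    Matrix (Fin r → Bool) (Fin r → Bool) R :=
  fun l l' =>
    (if l' = l then s else 0) +
      ∑ i : Fin r,
        if l' = Function.update l i (!(l i)) then
          -(-1 : R) ^ ((Finset.univ.filter fun j => i < j ∧ l j = true).card) *
            (if l i then 1 else t i)
        else 0

variable {r : ℕ} {R : Type*} [CommRing R]

/-- the exponent in the sign -/
def Kc (i : Fin r) (l : Fin r → Bool) : ℕ :=
  (Finset.univ.filter fun j => i < j ∧ l j = true).card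

lemma neg_one_pow_Kc (i : Fin r) (l : Fin r → Bool) :
    ((-1 : R) ^ Kc i l) = ∏ m, (if i < m ∧ l m = true then (-1 : R) else 1) := by
  rw [Kc, ← Finset.prod_const, Finset.prod_filter]

lemma sign_update (i j : Fin r) (l : Fin r → Bool) (b : Bool) :
    ((-1 : R) ^ Kc j (Function.update l i b)) =
      ((if j < i ∧ b = true then (-1 : R) else 1) *
        (if j < i ∧ l i = true then (-1 : R) else 1)) * (-1) ^ Kc j l := by
  rw [neg_one_pow_Kc, neg_one_pow_Kc,
    ← Finset.mul_prod_erase _ _ (Finset.mem_univ i),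
    ← Finset.mul_prod_erase _ _ (Finset.mem_univ i)]
  have hprod : ∏ m ∈ Finset.univ.erase i, (if j < m ∧ Function.update l i b m = true then (-1:R) else 1)
      = ∏ m ∈ Finset.univ.erase i, (if j < m ∧ l m = true then (-1:R) else 1) := by
    refine Finset.prod_congr rfl fun m hm => ?_
    rw [Function.update_of_ne (Finset.ne_of_mem_erase hm)]
  rw [hprod, Function.update_self]
  have hsq : (if j < i ∧ l i = true then (-1:R) else 1) * (if j < i ∧ l i = true then (-1:R) else 1) = 1 := by
    split <;> ring
  ring_nf
  rw [show ((if j < i ∧ l i = true then (-1:R) else 1)) ^ 2 = 1 by split <;> norm_num, mul_one]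

/-- off-diagonal coefficient -/
def cf (t : Fin r → R) (i : Fin r) (l : Fin r → Bool) : R :=
  -(-1 : R) ^ Kc i l * (if l i then 1 else t i)

lemma amat_zero_apply (t : Fin r → R) (l l' : Fin r → Bool) :
    Amat r (0 : R) t l l' =
      ∑ i : Fin r, if l' = Function.update l i (!(l i)) then cf t i l else 0 := by
  simp [Amat, cf, Kc]

lemma cf_update_ne (t : Fin r → R) {i j : Fin r} (h : j ≠ i) (l : Fin r → Bool) (b : Bool) :
    cf t j (Function.update l i b) =
      ((if j < i ∧ b = true then (-1 : R) else 1) *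
        (if j < i ∧ l i = true then (-1 : R) else 1)) * cf t j l := by
  rw [cf, cf, sign_update, Function.update_of_ne h]
  ring

lemma cf_diag (t : Fin r → R) (i : Fin r) (l : Fin r → Bool) :
    cf t i l * cf t i (Function.update l i (!(l i))) = t i := by
  rw [cf, cf, sign_update, Function.update_self]
  have h1 : ¬ (i < i) := lt_irrefl i
  simp only [h1, false_and, if_false, one_mul]
  have hk : (-1:R) ^ Kc i l * (-1) ^ Kc i l = 1 := by
    rw [← pow_add, ← two_mul, pow_mul]; norm_num
  have hk2 : (-1:R) ^ (Kc i l * 2) = 1 := by rw [pow_mul']; norm_num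
  cases h : l i <;> simp <;> ring_nf <;> rw [hk2] <;> ring

lemma cf_anticomm (t : Fin r → R) {i j : Fin r} (h : i ≠ j) (l : Fin r → Bool) :
    cf t i l * cf t j (Function.update l i (!(l i))) +
      cf t j l * cf t i (Function.update l j (!(l j))) = 0 := by
  rw [cf_update_ne t h.symm, cf_update_ne t h]
  have key : ∀ (i' j' : Fin r),
      (if j' < i' ∧ (!(l i')) = true then (-1:R) else 1) *
        (if j' < i' ∧ l i' = true then (-1:R) else 1) = if j' < i' then -1 else 1 := by
    intro i' j'
    cases h' : l i' <;> by_cases hP : j' < i' <;> simp [hP, h']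
  rw [key i j, key j i]
  rcases lt_or_gt_of_ne h with hij | hij
  · simp only [if_pos hij, if_neg (asymm hij)]
    ring
  · simp only [if_pos hij, if_neg (asymm hij)]
    ring

lemma update_update_self (l : Fin r → Bool) (i : Fin r) :
    Function.update (Function.update l i (!(l i))) i
      (!(Function.update l i (!(l i)) i)) = l := by
  rw [Function.update_self, Bool.not_not, Function.update_idem, Function.update_eq_self]

lemma amat_zero_mul_self (t : Fin r → R) :
    Amat r (0 : R) t * Amat r 0 t =
      (∑ i, t i) • (1 : Matrix (Fin r → Bool) (Fin r → Bool) R) := by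
  ext l l''
  rw [Matrix.mul_apply]
  simp only [amat_zero_apply]
  simp only [Finset.sum_mul, ite_mul, zero_mul]
  rw [Finset.sum_comm]
  simp only [Finset.sum_ite_eq', Finset.mem_univ, if_true]
  simp only [Finset.mul_sum, mul_ite, mul_zero]
  by_cases h : l'' = l
  · subst h
    have hiff : ∀ i j : Fin r,
        (l'' = Function.update (Function.update l'' i (!(l'' i))) j
            (!(Function.update l'' i (!(l'' i)) j))) ↔ j = i := by
      intro i j
      constructor
      · intro he
        by_contra hne
        have h2 := congrFun he j
        rw [Function.update_self, Function.update_of_ne hne] at h2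
        simp at h2
      · rintro rfl
        rw [update_update_self]
    simp only [hiff]
    simp only [Finset.sum_ite_eq', Finset.mem_univ, if_true]
    rw [Finset.sum_congr rfl (fun i _ => cf_diag t i l'')]
    simp [Matrix.one_apply]
  · rw [← Finset.sum_product']
    have hrhs : ((∑ i, t i) • (1 : Matrix (Fin r → Bool) (Fin r → Bool) R)) l l'' = 0 := by
      simp [Matrix.one_apply, Ne.symm h]
    rw [hrhs]
    refine Finset.sum_involution (fun p _ => (p.2, p.1)) ?_ ?_
      (fun p hp => Finset.mem_univ _) (fun p hp => rfl)
    · rintro ⟨i, j⟩ -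
      by_cases hij : i = j
      · subst hij
        simp [update_update_self, h]
      · have hcomm : Function.update (Function.update l i (!(l i))) j
            (!(Function.update l i (!(l i)) j)) =
            Function.update (Function.update l j (!(l j))) i
              (!(Function.update l j (!(l j)) i)) := by
          rw [Function.update_of_ne (Ne.symm hij), Function.update_of_ne hij,
            Function.update_comm hij]
        simp only
        rw [hcomm]
        by_cases hc : l'' = Function.update (Function.update l j (!(l j))) i
            (!(Function.update l j (!(l j)) i))
        · rw [if_pos hc, if_pos hc]
          exact cf_anticomm t hij l
        · rw [if_neg hc, if_neg hc]; ring
    · rintro ⟨i, j⟩ - hf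
      intro heq
      have hji : j = i := (Prod.mk.injEq _ _ _ _).mp heq |>.1
      subst hji
      apply hf
      simp [update_update_self, h]

/-- diagonal sign -/
def dsgn (l : Fin r → Bool) : R := ∏ m, (if l m = true then (-1 : R) else 1)

lemma dsgn_sq (l : Fin r → Bool) : (dsgn l : R) * dsgn l = 1 := by
  rw [dsgn, ← Finset.prod_mul_distrib]
  refine Finset.prod_eq_one fun m _ => ?_
  split <;> ring

lemma dsgn_update (l : Fin r → Bool) (i : Fin r) :
    (dsgn l : R) * dsgn (Function.update l i (!(l i))) = -1 := by
  rw [dsgn, dsgn, ← Finset.mul_prod_erase _ _ (Finset.mem_univ i),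
    ← Finset.mul_prod_erase _ _ (Finset.mem_univ i)]
  have hprod : ∏ m ∈ Finset.univ.erase i,
      (if Function.update l i (!(l i)) m = true then (-1:R) else 1)
      = ∏ m ∈ Finset.univ.erase i, (if l m = true then (-1:R) else 1) := by
    refine Finset.prod_congr rfl fun m hm => ?_
    rw [Function.update_of_ne (Finset.ne_of_mem_erase hm)]
  rw [hprod, Function.update_self]
  have hsq : (∏ m ∈ Finset.univ.erase i, (if l m = true then (-1:R) else 1)) *
      (∏ m ∈ Finset.univ.erase i, (if l m = true then (-1:R) else 1)) = 1 := by
    rw [← Finset.prod_mul_distrib]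
    refine Finset.prod_eq_one fun m _ => ?_
    split <;> ring
  cases hli : l i <;> simp <;> ring_nf <;> rw [sq, hsq]

/-- the diagonal sign matrix -/
def Dmat (r : ℕ) (R : Type*) [CommRing R] : Matrix (Fin r → Bool) (Fin r → Bool) R :=
  Matrix.diagonal (fun l => dsgn l)

lemma Dmat_sq : Dmat r R * Dmat r R = 1 := by
  rw [Dmat, Matrix.diagonal_mul_diagonal]
  have : (fun l : Fin r → Bool => (dsgn l : R) * dsgn l) = fun _ => 1 := by
    funext l; exact dsgn_sq l
  rw [this, Matrix.diagonal_one]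

lemma Dmat_conj (t : Fin r → R) :
    Dmat r R * Amat r (0 : R) t * Dmat r R = -Amat r (0 : R) t := by
  ext l l'
  rw [Dmat, Matrix.mul_diagonal, Matrix.diagonal_mul, Matrix.neg_apply]
  simp only [amat_zero_apply, Finset.mul_sum, Finset.sum_mul, mul_ite, ite_mul,
    mul_zero, zero_mul, ← Finset.sum_neg_distrib]
  refine Finset.sum_congr rfl fun i _ => ?_
  by_cases h : l' = Function.update l i (!(l i))
  · rw [if_pos h, if_pos h, h]
    have hd := dsgn_update (R := R) l i
    calc dsgn l * cf t i l * dsgn (Function.update l i (!(l i)))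
        = cf t i l * ((dsgn l : R) * dsgn (Function.update l i (!(l i)))) := by ring
      _ = -cf t i l := by rw [hd]; ring
  · rw [if_neg h, if_neg h, neg_zero]

lemma Amat_map {S : Type*} [CommRing S] (f : R →+* S) (s : R) (t : Fin r → R) :
    (Amat r s t).map f = Amat r (f s) (fun i => f (t i)) := by
  ext l l'
  simp only [Amat, Matrix.map_apply, map_add, map_sum, apply_ite f, map_mul, map_neg,
    map_pow, map_one, map_zero]

lemma Amat_eq_smul_add (s : R) (t : Fin r → R) :
    Amat r s t = s • (1 : Matrix (Fin r → Bool) (Fin r → Bool) R) + Amat r 0 t := by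
  ext l l'
  rw [Matrix.add_apply, Matrix.smul_apply, Matrix.one_apply, Amat, Amat]
  by_cases h : l' = l
  · simp [h]
  · simp [h, fun a b : Fin r → Bool => (eq_comm : a = b ↔ b = a), Ne.symm h]

open Polynomial

theorem det_Amat (r : ℕ) (hr : 1 < r) (s : ℝ) (t : Fin r → ℝ) :
    (Amat r s t).det = (s ^ 2 - ∑ i, t i) ^ 2 ^ (r - 1) := by
  classical
  have hcard : Fintype.card (Fin r → Bool) = 2 ^ r := by simp
  have hpow : 2 ^ (r - 1) + 2 ^ (r - 1) = 2 ^ r := by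
    rw [← two_mul, ← pow_succ']; congr 1; omega
  have heven : Even (2 ^ r) := ⟨2 ^ (r - 1), hpow.symm⟩
  set ct : Fin r → ℝ[X] := fun i => C (t i) with hct
  set N : Matrix (Fin r → Bool) (Fin r → Bool) ℝ[X] := Amat r 0 ct with hN
  set p : ℝ[X] := (Amat r X ct).det with hp
  set q : ℝ[X] := (X ^ 2 - C (∑ i, t i)) ^ 2 ^ (r - 1) with hq
  have h1 : Amat r (X : ℝ[X]) ct = X • 1 + N := Amat_eq_smul_add _ _
  have hmapN : (Amat r (0:ℝ) t).map C = N := by rw [Amat_map]; simp [hN, hct]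
  have hcharm : Matrix.charmatrix (-(Amat r (0:ℝ) t)) = (X : ℝ[X]) • 1 + N := by
    ext i j
    rw [Matrix.charmatrix_apply, Matrix.add_apply, Matrix.smul_one_eq_diagonal, ← hmapN,
      Matrix.map_apply, Matrix.neg_apply, map_neg, sub_neg_eq_add]
  have hpm : p.Monic := by
    have h2 := Matrix.charpoly_monic (-(Amat r (0:ℝ) t))
    rwa [Matrix.charpoly, hcharm, ← h1, ← hp] at h2
  have hqm : q.Monic := hq ▸ (monic_X_pow_sub_C _ (two_ne_zero)).pow _
  have hDD : (Dmat r ℝ[X]).det * (Dmat r ℝ[X]).det = 1 := by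
    rw [← Matrix.det_mul, Dmat_sq, Matrix.det_one]
  have hc := Dmat_conj ct
  rw [← hN] at hc
  have hconj : Dmat r ℝ[X] * ((X : ℝ[X]) • 1 - N) * Dmat r ℝ[X] = (X : ℝ[X]) • 1 + N := by
    rw [mul_sub, sub_mul, hc, Matrix.mul_smul, mul_one, Matrix.smul_mul, Dmat_sq,
      sub_neg_eq_add]
  have hdetsub : ((X : ℝ[X]) • 1 - N).det = p := by
    have hd := congrArg Matrix.det hconj
    rw [Matrix.det_mul, Matrix.det_mul] at hd
    calc ((X : ℝ[X]) • 1 - N).det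
        = ((Dmat r ℝ[X]).det * (Dmat r ℝ[X]).det) * ((X : ℝ[X]) • 1 - N).det := by
          rw [hDD, one_mul]
      _ = (Dmat r ℝ[X]).det * ((X : ℝ[X]) • 1 - N).det * (Dmat r ℝ[X]).det := by ring
      _ = ((X : ℝ[X]) • 1 + N).det := hd
      _ = p := by rw [hp, h1]
  have hNN : N * N = (∑ i, ct i) • 1 := amat_zero_mul_self ct
  have hsum : ∑ i, ct i = C (∑ i, t i) := by simp [hct]
  have hmul : ((X : ℝ[X]) • 1 + N) * (N - (X : ℝ[X]) • 1) =
      (C (∑ i, t i) - (X : ℝ[X]) ^ 2) • 1 := by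
    have e1 : ((X : ℝ[X]) • (1 : Matrix (Fin r → Bool) (Fin r → Bool) ℝ[X])) * N = (X : ℝ[X]) • N := by
      rw [Matrix.smul_mul, one_mul]
    have e2 : N * ((X : ℝ[X]) • (1 : Matrix (Fin r → Bool) (Fin r → Bool) ℝ[X])) = (X : ℝ[X]) • N := by
      rw [Matrix.mul_smul, mul_one]
    have e3 : ((X : ℝ[X]) • (1 : Matrix (Fin r → Bool) (Fin r → Bool) ℝ[X])) *
        ((X : ℝ[X]) • (1 : Matrix (Fin r → Bool) (Fin r → Bool) ℝ[X])) =
        ((X : ℝ[X]) ^ 2) • 1 := by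
      rw [Matrix.smul_mul, one_mul, smul_smul, sq]
    rw [add_mul, mul_sub, mul_sub, e1, e2, e3, hNN, hsum, sub_smul]
    abel
  have hpp : p * p = q * q := by
    have hd := congrArg Matrix.det hmul
    rw [Matrix.det_mul] at hd
    have hdet1 : (N - (X : ℝ[X]) • 1).det = p := by
      rw [← neg_sub, Matrix.det_neg, hcard, hdetsub, heven.neg_one_pow, one_mul]
    have hdet2 : ((C (∑ i, t i) - (X : ℝ[X]) ^ 2) •
        (1 : Matrix (Fin r → Bool) (Fin r → Bool) ℝ[X])).det =
        (C (∑ i, t i) - (X : ℝ[X]) ^ 2) ^ 2 ^ r := by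
      rw [Matrix.det_smul, Matrix.det_one, mul_one, hcard]
    rw [hdet1, hdet2, ← h1, ← hp] at hd
    rw [hd, hq, ← pow_add, hpow, ← neg_sub ((X:ℝ[X])^2) _, heven.neg_pow]
  have hpq : p = q := by
    have hfac : (p - q) * (p + q) = 0 := by linear_combination hpp
    rcases mul_eq_zero.mp hfac with h0 | h0
    · exact sub_eq_zero.mp h0
    · exfalso
      have hpq' : p = -q := eq_neg_of_add_eq_zero_left h0
      have h1' : p.leadingCoeff = 1 := hpm
      rw [hpq', Polynomial.leadingCoeff_neg, hqm.leadingCoeff] at h1'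
      norm_num at h1'
  have heval := RingHom.map_det (evalRingHom s) (Amat r X ct)
  rw [RingHom.mapMatrix_apply, Amat_map] at heval
  simp only [coe_evalRingHom, eval_X, hct, eval_C] at heval
  rw [← hp] at heval
  rw [← heval, hpq, hq]
  simp [Polynomial.eval_finset_sum]
end

section
/- For the matrix A(s; t_1,...,t_r) defined below, A(s; t_1,...,t_r) · A(-s; t_1,...,t_r) = ((t_1 + ... + t_r) - s^2) · I, where I is the 2^r × 2^r identity matrix. -/
namespace AmatAux

variable {R : Type*} [CommRing R] {r : ℕ}

def flip (l : Fin r → Bool) (i : Fin r) : Fin r → Bool :=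
  Function.update l i (!(l i))

lemma flip_apply (l : Fin r → Bool) (i j : Fin r) :
    flip l i j = if j = i then !(l i) else l j := by
  simp [flip, Function.update_apply]

@[simp] lemma flip_self (l : Fin r → Bool) (i : Fin r) : flip l i i = !(l i) := by
  simp [flip_apply]

lemma flip_ne (l : Fin r → Bool) {i j : Fin r} (h : j ≠ i) : flip l i j = l j := by
  simp [flip_apply, h]

@[simp] lemma flip_flip (l : Fin r → Bool) (i : Fin r) : flip (flip l i) i = l := by
  funext j
  by_cases h : j = i
  · subst h; simp [flip_apply]
  · simp [flip_apply, h]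

lemma flip_comm (l : Fin r → Bool) {i j : Fin r} (h : i ≠ j) :
    flip (flip l i) j = flip (flip l j) i := by
  funext k
  by_cases hk : k = i
  · subst hk; simp [flip_apply, h, Ne.symm h]
  · by_cases hk2 : k = j
    · subst hk2; simp [flip_apply, h, Ne.symm h, hk]
    · simp [flip_apply, hk, hk2]

def N (i : Fin r) (l : Fin r → Bool) : ℕ :=
  (Finset.univ.filter fun j => i < j ∧ l j = true).card

def sgn (i : Fin r) (l : Fin r → Bool) : R := -(-1 : R) ^ (N i l)

def cc (t : Fin r → R) (i : Fin r) (l : Fin r → Bool) : R :=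
  sgn i l * (if l i then 1 else t i)

lemma N_flip_self (i : Fin r) (l : Fin r → Bool) : N i (flip l i) = N i l := by
  unfold N
  congr 1
  apply Finset.filter_congr
  intro j _
  by_cases h : j = i
  · subst h; simp
  · simp [flip_ne l h]

lemma N_flip_of_lt {i j : Fin r} (l : Fin r → Bool) (h : i < j) :
    N j (flip l i) = N j l := by
  unfold N
  congr 1
  apply Finset.filter_congr
  intro k _
  by_cases hk : k = i
  · subst hk
    constructor <;> rintro ⟨h1, h2⟩ <;> exact absurd (h.trans h1) (lt_irrefl _)
  · simp [flip_ne l hk]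

lemma N_flip_of_gt {i j : Fin r} (l : Fin r → Bool) (h : i < j) :
    (l j = true ∧ N i l = N i (flip l j) + 1) ∨
    (l j = false ∧ N i (flip l j) = N i l + 1) := by
  cases hj : l j with
  | false =>
    right
    refine ⟨rfl, ?_⟩
    have hset : (Finset.univ.filter fun k => i < k ∧ flip l j k = true)
        = insert j (Finset.univ.filter fun k => i < k ∧ l k = true) := by
      ext k
      by_cases hk : k = j
      · subst hk; simp [h, hj]
      · simp [flip_ne l hk, hk]
    unfold N
    rw [hset, Finset.card_insert_of_notMem (by simp [hj])]
  | true =>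
    left
    refine ⟨rfl, ?_⟩
    have hset : (Finset.univ.filter fun k => i < k ∧ l k = true)
        = insert j (Finset.univ.filter fun k => i < k ∧ flip l j k = true) := by
      ext k
      by_cases hk : k = j
      · subst hk; simp [h, hj]
      · simp [flip_ne l hk, hk]
    unfold N
    rw [hset, Finset.card_insert_of_notMem (by simp [hj])]

lemma sgn_flip_of_gt {i j : Fin r} (l : Fin r → Bool) (h : i < j) :
    (sgn i (flip l j) : R) = - sgn i l := by
  rcases N_flip_of_gt l h (i := i) with ⟨_, hN⟩ | ⟨_, hN⟩ <;>
    simp [sgn, hN, pow_succ] <;> ring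

lemma cc_mul_cc_flip_self (t : Fin r → R) (i : Fin r) (l : Fin r → Bool) :
    cc t i l * cc t i (flip l i) = t i := by
  unfold cc sgn
  rw [N_flip_self]
  have hsq : ((-1 : R) ^ (N i l)) * ((-1 : R) ^ (N i l)) = 1 := by
    rw [← pow_add, ← two_mul, pow_mul]
    norm_num
  cases hli : l i <;> simp [hli] <;>
    calc _ = ((-1 : R) ^ (N i l)) * ((-1 : R) ^ (N i l)) * t i := by ring
      _ = t i := by rw [hsq]; ring

lemma cc_antisymm {i j : Fin r} (t : Fin r → R) (l : Fin r → Bool) (h : i < j) :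
    cc t i l * cc t j (flip l i) = -(cc t j l * cc t i (flip l j)) := by
  have h1 : cc t j (flip l i) = cc t j l := by
    unfold cc
    rw [flip_ne l (Ne.symm h.ne)]
    unfold sgn
    rw [N_flip_of_lt l h]
  have h2 : cc t i (flip l j) = - cc t i l := by
    unfold cc
    rw [flip_ne l h.ne, sgn_flip_of_gt l h]
    ring
  rw [h1, h2]
  ring

lemma B_apply (t : Fin r → R) (l l' : Fin r → Bool) :
    Amat r (0 : R) t l l' = ∑ i, if l' = flip l i then cc t i l else 0 := by
  simp only [Amat, ite_self, zero_add]
  rfl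

lemma B_mul_B (t : Fin r → R) :
    Amat r (0 : R) t * Amat r 0 t = (∑ i, t i) • (1 : Matrix (Fin r → Bool) (Fin r → Bool) R) := by
  ext l l''
  rw [Matrix.mul_apply]
  have key : ∑ l', Amat r (0 : R) t l l' * Amat r 0 t l' l''
      = ∑ i, ∑ j, if l'' = flip (flip l i) j then cc t i l * cc t j (flip l i) else 0 := by
    calc ∑ l', Amat r (0 : R) t l l' * Amat r 0 t l' l''
        = ∑ l', ∑ i, if l' = flip l i then cc t i l * Amat r 0 t l' l'' else 0 := by
          refine Finset.sum_congr rfl fun l' _ => ?_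
          rw [B_apply, Finset.sum_mul]
          exact Finset.sum_congr rfl fun i _ => by rw [ite_mul, zero_mul]
      _ = ∑ i, ∑ l', if l' = flip l i then cc t i l * Amat r 0 t l' l'' else 0 :=
          Finset.sum_comm
      _ = ∑ i, cc t i l * Amat r 0 t (flip l i) l'' := by
          refine Finset.sum_congr rfl fun i _ => ?_
          rw [Finset.sum_ite_eq' Finset.univ (flip l i)
            (fun l' => cc t i l * Amat r 0 t l' l'')]
          simp
      _ = ∑ i, ∑ j, if l'' = flip (flip l i) j then cc t i l * cc t j (flip l i) else 0 := by
          refine Finset.sum_congr rfl fun i _ => ?_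
          rw [B_apply, Finset.mul_sum]
          exact Finset.sum_congr rfl fun j _ => by rw [mul_ite, mul_zero]
  rw [key]
  by_cases hl : l'' = l
  · subst hl
    rw [Matrix.smul_apply, Matrix.one_apply_eq, smul_eq_mul, mul_one]
    refine Finset.sum_congr rfl fun i _ => ?_
    rw [Finset.sum_eq_single i]
    · rw [if_pos (by rw [flip_flip]), cc_mul_cc_flip_self]
    · intro j _ hj
      rw [if_neg]
      intro hcon
      have hi := congrFun hcon i
      rw [flip_apply (flip l'' i) j i, if_neg (Ne.symm hj), flip_self] at hi
      simp at hi
    · simp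
  · rw [Matrix.smul_apply, Matrix.one_apply_ne (fun h => hl h.symm), smul_zero]
    rw [← Finset.sum_product']
    apply Finset.sum_involution (fun p _ => (p.2, p.1))
    · intro p _
      obtain ⟨i, j⟩ := p
      by_cases hij : i = j
      · subst hij
        simp [flip_flip, hl]
      · have hcond : (l'' = flip (flip l i) j) ↔ (l'' = flip (flip l j) i) := by
          rw [flip_comm l hij]
        by_cases hc : l'' = flip (flip l i) j
        · rw [if_pos hc, if_pos (hcond.mp hc)]
          rcases lt_or_gt_of_ne hij with hlt | hgt
          · rw [cc_antisymm t l hlt]; ring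
          · rw [cc_antisymm t l hgt]; ring
        · rw [if_neg hc, if_neg (fun hh => hc (hcond.mpr hh))]
          ring
    · intro p _ hf hcon
      obtain ⟨i, j⟩ := p
      have hij : j = i := congrArg Prod.fst hcon
      subst hij
      exact hf (by simp [flip_flip, hl])
    · intro p _; simp
    · intro p _; rfl

lemma Amat_decomp (r : ℕ) (s : R) (t : Fin r → R) :
    Amat r s t = s • (1 : Matrix (Fin r → Bool) (Fin r → Bool) R) + Amat r 0 t := by
  ext l l'
  simp only [Amat, Matrix.add_apply, Matrix.smul_apply, Matrix.one_apply, smul_eq_mul, ite_self,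
    zero_add]
  by_cases h : l' = l
  · subst h; simp
  · simp [h, Ne.symm h]

end AmatAux

theorem Amat_mul_Amat_neg {R : Type*} [CommRing R] (r : ℕ) (hr : 0 < r)
    (s : R) (t : Fin r → R) :
    Amat r s t * Amat r (-s) t = ((∑ i, t i) - s ^ 2) • (1 : Matrix (Fin r → Bool) (Fin r → Bool) R) := by
  rw [AmatAux.Amat_decomp r s t, AmatAux.Amat_decomp r (-s) t]
  rw [add_mul, mul_add, mul_add, AmatAux.B_mul_B]
  simp only [smul_mul_assoc, mul_smul_comm, one_mul, mul_one, smul_smul]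
  rw [show -s * s = -(s ^ 2) by ring, sub_smul]
  simp only [neg_smul]
  abel
end

section
/- If t_1, ..., t_r are positive real numbers with t_1 + ... + t_r = s^2 and s > 0, then the matrix A(s; t_1,...,t_r) has rank 2^{r-1}. -/
open Finset

theorem Finset.sum_mul_sum_self_of_anticomm {R ι : Type*} [Ring R] [DecidableEq ι]
    (s : Finset ι) (M : ι → R)
    (hM : ∀ i ∈ s, ∀ j ∈ s, i ≠ j → M i * M j + M j * M i = 0) :
    (∑ i ∈ s, M i) * (∑ i ∈ s, M i) = ∑ i ∈ s, M i * M i := by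
  induction s using Finset.induction_on with
  | empty => simp
  | insert a s ha ih =>
    have hcross : M a * ∑ i ∈ s, M i + (∑ i ∈ s, M i) * M a = 0 := by
      rw [mul_sum, sum_mul, ← sum_add_distrib]
      exact sum_eq_zero fun i hi =>
        hM a (mem_insert_self a s) i (mem_insert_of_mem hi) (ne_of_mem_of_not_mem hi ha).symm
    have hMs : ∀ i ∈ s, ∀ j ∈ s, i ≠ j → M i * M j + M j * M i = 0 :=
      fun i hi j hj => hM i (mem_insert_of_mem hi) j (mem_insert_of_mem hj)
    rw [sum_insert ha, sum_insert ha, ← ih hMs, ← add_zero (M a * M a), ← hcross]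
    noncomm_ring

namespace Matrix

variable {K n : Type*} [Field K] [Fintype n] [DecidableEq n]

theorem rank_eq_trace_of_isIdempotentElem {P : Matrix n n K} (hP : IsIdempotentElem P) :
    (P.rank : K) = P.trace := by
  have hproj : LinearMap.IsProj (LinearMap.range (toLin' P)) (toLin' P) :=
    LinearMap.IsIdempotentElem.isProj_range _ (hP.map (toLinAlgEquiv' (R := K)))
  rw [← trace_toLin'_eq, hproj.trace, toLin'_apply', rank]

theorem rank_eq_trace_div_of_mul_self_eq_smul {A : Matrix n n K} {c : K} (hc : c ≠ 0)
    (hA : A * A = c • A) : (A.rank : K) = A.trace / c := by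
  have hidem : IsIdempotentElem (c⁻¹ • A) := by
    rw [IsIdempotentElem, smul_mul_smul_comm, hA, smul_smul, mul_assoc, inv_mul_cancel₀ hc,
      mul_one]
  rw [← rank_smul_of_mem_nonZeroDivisors A (mem_nonZeroDivisors_of_ne_zero (inv_ne_zero hc)),
    rank_eq_trace_of_isIdempotentElem hidem, trace_smul, smul_eq_mul, inv_mul_eq_div]

end Matrix

namespace Amat

variable {R : Type*} [CommRing R] {r : ℕ}

def flipSign (i : Fin r) (l : Fin r → Bool) : R :=
  -(-1 : R) ^ (#{j | i < j ∧ l j = true})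

def flipMat (t : Fin r → R) (i : Fin r) : Matrix (Fin r → Bool) (Fin r → Bool) R :=
  fun l l' => if l' = Function.update l i (!l i) then flipSign i l * (if l i then 1 else t i) else 0

theorem eq_smul_one_add_sum_flipMat (s : R) (t : Fin r → R) :
    Amat r s t = s • 1 + ∑ i, flipMat t i := by
  ext l l'
  simp only [Amat, flipMat, flipSign, Matrix.add_apply, Matrix.smul_apply, Matrix.one_apply,
    Matrix.sum_apply, smul_eq_mul, mul_ite, mul_one, mul_zero, eq_comm]

theorem flipSign_mul_self (i : Fin r) (l : Fin r → Bool) :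
    flipSign i l * flipSign i l = (1 : R) := by
  rw [flipSign, neg_mul_neg, ← pow_add]
  exact Even.neg_one_pow ⟨_, rfl⟩

theorem flipSign_update_of_le {i j : Fin r} (h : i ≤ j) (l : Fin r → Bool) (b : Bool) :
    flipSign j (Function.update l i b) = (flipSign j l : R) := by
  unfold flipSign
  congr 3
  refine Finset.filter_congr fun k _ => and_congr_right fun hk => ?_
  rw [Function.update_of_ne (h.trans_lt hk).ne']

theorem flipSign_update_of_lt {i j : Fin r} (h : i < j) (l : Fin r → Bool) :
    flipSign i (Function.update l j (!l j)) = -(flipSign i l : R) := by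
  have hinsert {U V : Finset (Fin r)} (hU : j ∉ U) (hV : V = insert j U) :
      -(-1 : R) ^ #V = -(-(-1 : R) ^ #U) := by
    rw [hV, card_insert_of_notMem hU, pow_succ]
    ring
  unfold flipSign
  cases hlj : l j with
  | false =>
    refine hinsert (by simp [hlj]) (Finset.ext fun k => ?_)
    by_cases hk : k = j <;> simp [hk, hlj, h]
  | true =>
    refine neg_eq_iff_eq_neg.mp (hinsert (by simp) (Finset.ext fun k => ?_)).symm
    by_cases hk : k = j <;> simp [hk, hlj, h]

theorem flipMat_mul_apply (t : Fin r → R) (i j : Fin r) (l l' : Fin r → Bool) :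
    (flipMat t i * flipMat t j) l l' =
      flipSign i l * (if l i then 1 else t i) * flipMat t j (Function.update l i (!l i)) l' := by
  simp only [Matrix.mul_apply, flipMat, ite_mul, zero_mul]
  simp [Finset.sum_ite_eq']

theorem flipMat_mul_self (t : Fin r → R) (i : Fin r) : flipMat t i * flipMat t i = t i • 1 := by
  ext l l'
  rw [flipMat_mul_apply]
  simp only [flipMat, Function.update_self, Bool.not_not, Function.update_idem,
    Function.update_eq_self, flipSign_update_of_le le_rfl, Matrix.smul_apply, Matrix.one_apply,
    smul_eq_mul]
  rcases eq_or_ne l l' with rfl | hl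
  · cases l i <;> simp <;> linear_combination t i * flipSign_mul_self (R := R) i l
  · simp [hl, hl.symm]

/-- Flipping bit `j` changes the sign attached to every lower bit `i < j`, but flipping bit `i`
leaves the sign of bit `j` alone. -/
theorem flipMat_anticomm_of_lt (t : Fin r → R) {i j : Fin r} (h : i < j) :
    flipMat t i * flipMat t j + flipMat t j * flipMat t i = 0 := by
  ext l l'
  rw [Matrix.add_apply, flipMat_mul_apply, flipMat_mul_apply, Matrix.zero_apply]
  simp only [flipMat, Function.update_of_ne h.ne', Function.update_of_ne h.ne,
    flipSign_update_of_le h.le, flipSign_update_of_lt h, Function.update_comm h.ne]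
  split_ifs <;> ring

theorem flipMat_anticomm (t : Fin r → R) {i j : Fin r} (h : i ≠ j) :
    flipMat t i * flipMat t j + flipMat t j * flipMat t i = 0 := by
  rcases h.lt_or_gt with h | h
  · exact flipMat_anticomm_of_lt t h
  · rw [add_comm, flipMat_anticomm_of_lt t h]

theorem sum_flipMat_mul_self (t : Fin r → R) :
    (∑ i, flipMat t i) * (∑ i, flipMat t i) = (∑ i, t i) • 1 := by
  rw [sum_mul_sum_self_of_anticomm _ _ fun i _ j _ h => flipMat_anticomm t h, sum_smul]
  exact sum_congr rfl fun i _ => flipMat_mul_self t i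

end Amat

theorem Amat_mul_self {R : Type*} [CommRing R] {r : ℕ} {s : R} {t : Fin r → R}
    (hsum : ∑ i, t i = s ^ 2) : Amat r s t * Amat r s t = (2 * s) • Amat r s t := by
  rw [Amat.eq_smul_one_add_sum_flipMat, add_mul, mul_add, mul_add, Amat.sum_flipMat_mul_self,
    hsum]
  simp only [smul_mul_assoc, mul_smul_comm, one_mul, mul_one]
  module

theorem trace_Amat {R : Type*} [CommRing R] (r : ℕ) (s : R) (t : Fin r → R) :
    (Amat r s t).trace = 2 ^ r * s := by
  simp [Matrix.trace, Amat, eq_comm (b := Function.update _ _ _)]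

theorem rank_Amat_general (r : ℕ) (s : ℝ) (hs : 0 < s) (t : Fin r → ℝ)
    (hsum : ∑ i, t i = s ^ 2) :
    (Amat r s t).rank = 2 ^ (r - 1) := by
  have hr : r ≠ 0 := by
    rintro rfl
    exact (pow_pos hs 2).ne (Fin.sum_univ_zero t ▸ hsum)
  have hrank := Matrix.rank_eq_trace_div_of_mul_self_eq_smul (by positivity) (Amat_mul_self hsum)
  have htrace : (2 : ℝ) ^ r * s / (2 * s) = 2 ^ (r - 1) := by
    rw [← Nat.sub_add_cancel (Nat.one_le_iff_ne_zero.2 hr), pow_succ, Nat.add_sub_cancel]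
    field_simp
  rw [trace_Amat, htrace] at hrank
  exact_mod_cast hrank

theorem rank_Amat (r : ℕ) (hr : 1 < r) (s : ℝ) (hs : 0 < s) (t : Fin r → ℝ)
    (ht : ∀ i, 0 < t i) (hsum : ∑ i, t i = s ^ 2) :
    (Amat r s t).rank = 2 ^ (r - 1) :=
  rank_Amat_general r s hs t hsum
end

section
/- Writing A(s; t_1,...,t_r) = sI - B, if t_1,...,t_r are positive reals then the matrix D B D^{-1} is real symmetric, where D is the diagonal matrix with entries D_{l,l} = (t_1^{l_1} t_2^{l_2} ⋯ t_r^{l_r})^{1/2}; consequently all eigenvalues of B are real. -/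
/-- The matrix `B` with zero diagonal satisfying `A(s;t) = s·I - B`. -/
def Bmat (r : ℕ) {R : Type*} [CommRing R] (t : Fin r → R) :
    Matrix (Fin r → Bool) (Fin r → Bool) R :=
  -(Amat r 0 t)

/-! Conjugating by `D = diag(√w)` makes a real matrix `M` symmetric as soon as
`w l * M l l' = w l' * M l' l`. For `w l = ∏ t_i ^ l_i` this holds for `B` term by term: two
sequences differing only at `i` give entries with the same sign, and
`w l * (l_i ? 1 : t_i) = t_i * ∏_{j ≠ i} t_j ^ l_j` does not depend on `l_i`.
The conjugate has the characteristic polynomial of `B`, and over `ℂ` it is Hermitian, so its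
roots are real. -/

open Matrix Polynomial Finset

section Spectrum

variable {n : Type*} [Fintype n] [DecidableEq n]

lemma Matrix.IsHermitian.im_eq_zero_of_isRoot_charpoly {A : Matrix n n ℂ} (hA : A.IsHermitian)
    {z : ℂ} (hz : A.charpoly.IsRoot z) : z.im = 0 := by
  have hmem : z ∈ A.charpoly.roots := (mem_roots A.charpoly_monic.ne_zero).2 hz
  rw [hA.roots_charpoly_eq_eigenvalues, Multiset.mem_map] at hmem
  obtain ⟨i, -, rfl⟩ := hmem
  simp

lemma Matrix.IsSymm.im_eq_zero_of_isRoot_charpoly_map {M : Matrix n n ℝ} (hM : M.IsSymm)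
    {z : ℂ} (hz : (M.charpoly.map Complex.ofRealHom).IsRoot z) : z.im = 0 := by
  rw [← charpoly_map] at hz
  exact ((isHermitian_iff_isSymm.2 hM).map _ fun x => (Complex.conj_ofReal x).symm)
    |>.im_eq_zero_of_isRoot_charpoly hz

lemma Matrix.charpoly_diagonal_mul_mul_diagonal_inv {K : Type*} [Field K] {d : n → K}
    (hd : ∀ i, d i ≠ 0) (M : Matrix n n K) :
    (diagonal d * M * diagonal (fun i => (d i)⁻¹)).charpoly = M.charpoly := by
  have hinv : diagonal (fun i => (d i)⁻¹) * diagonal d = 1 := by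
    rw [diagonal_mul_diagonal, ← diagonal_one]
    exact congrArg diagonal (funext fun i => inv_mul_cancel₀ (hd i))
  rw [charpoly_mul_comm, ← Matrix.mul_assoc, hinv, Matrix.one_mul]

lemma Matrix.isSymm_diagonal_sqrt_mul_mul_inv {w : n → ℝ} (hw : ∀ i, 0 < w i)
    {M : Matrix n n ℝ} (hM : ∀ i j, w i * M i j = w j * M j i) :
    (diagonal (fun i => √(w i)) * M * diagonal (fun i => (√(w i))⁻¹)).IsSymm := by
  refine IsSymm.ext fun i j => ?_
  simp only [mul_diagonal, diagonal_mul]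
  have hi := Real.sqrt_pos.2 (hw i)
  have hj := Real.sqrt_pos.2 (hw j)
  have hM' := hM i j
  rw [← Real.sq_sqrt (hw i).le, ← Real.sq_sqrt (hw j).le] at hM'
  field_simp
  linear_combination -hM'

end Spectrum

section Bmat

variable {r : ℕ} {R : Type*} [CommRing R] (t : Fin r → R)

def boolWeight (l : Fin r → Bool) : R := ∏ i, if l i then t i else 1

lemma Bmat_apply (l l' : Fin r → Bool) :
    Bmat r t l l' = ∑ i, if l' = Function.update l i (!(l i)) then
      (-1 : R) ^ (#{j | i < j ∧ l j = true}) * (if l i then 1 else t i) else 0 := by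
  simp only [Bmat, Amat, Matrix.neg_apply, ite_self, zero_add, ← sum_neg_distrib]
  refine sum_congr rfl fun i _ => ?_
  split_ifs <;> ring

lemma eq_update_not_comm {l l' : Fin r → Bool} {i : Fin r} :
    l' = Function.update l i (!(l i)) ↔ l = Function.update l' i (!(l' i)) := by
  constructor <;> rintro rfl <;> simp

lemma boolWeight_mul_eq_prod_erase (l : Fin r → Bool) (i : Fin r) :
    boolWeight t l * (if l i then 1 else t i) =
      t i * ∏ j ∈ univ.erase i, if l j then t j else 1 := by
  rw [boolWeight, ← mul_prod_erase univ _ (mem_univ i)]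
  cases l i <;> simp only [Bool.false_eq_true, if_true, if_false] <;> ring

lemma boolWeight_mul_Bmat_comm (l l' : Fin r → Bool) :
    boolWeight t l * Bmat r t l l' = boolWeight t l' * Bmat r t l' l := by
  simp only [Bmat_apply, mul_sum]
  refine sum_congr rfl fun i _ => ?_
  by_cases h : l' = Function.update l i (!(l i))
  · rw [if_pos h, if_pos (eq_update_not_comm.1 h)]
    have hoff : ∀ j ≠ i, l' j = l j := fun j hj => by rw [h, Function.update_of_ne hj]
    have hsign : #{j | i < j ∧ l' j = true} = #{j | i < j ∧ l j = true} := by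
      congr 1
      exact filter_congr fun j _ => and_congr_right fun hij => by rw [hoff j hij.ne']
    rw [hsign, mul_left_comm, boolWeight_mul_eq_prod_erase, mul_left_comm (boolWeight t l'),
      boolWeight_mul_eq_prod_erase]
    congr 2
    exact prod_congr rfl fun j hj => by rw [hoff j (ne_of_mem_erase hj)]
  · rw [if_neg h, if_neg (mt eq_update_not_comm.2 h), mul_zero, mul_zero]

end Bmat

lemma boolWeight_pos {r : ℕ} {t : Fin r → ℝ} (ht : ∀ i, 0 < t i) (l : Fin r → Bool) :
    0 < boolWeight t l :=
  prod_pos fun i _ => by split_ifs <;> [exact ht i; exact one_pos]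

theorem Bmat_conj_symm_and_eigenvalues_real_general (r : ℕ)
    (t : Fin r → ℝ) (ht : ∀ i, 0 < t i) :
    (Matrix.diagonal (fun l : Fin r → Bool => Real.sqrt (∏ i, if l i then t i else 1)) *
        Bmat r t *
        Matrix.diagonal (fun l : Fin r → Bool =>
          (Real.sqrt (∏ i, if l i then t i else 1))⁻¹)).IsSymm ∧
    ∀ z : ℂ, (((Bmat r t).map (fun x : ℝ => (x : ℂ))).charpoly.IsRoot z → z.im = 0) := by
  have hsymm := isSymm_diagonal_sqrt_mul_mul_inv (boolWeight_pos ht) (boolWeight_mul_Bmat_comm t)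
  have hd : ∀ l, √(boolWeight t l) ≠ 0 := fun l => (Real.sqrt_pos.2 (boolWeight_pos ht l)).ne'
  refine ⟨hsymm, fun z hz => hsymm.im_eq_zero_of_isRoot_charpoly_map ?_⟩
  rwa [charpoly_diagonal_mul_mul_diagonal_inv hd, ← charpoly_map]

theorem Bmat_conj_symm_and_eigenvalues_real (r : ℕ) (hr : 1 < r)
    (t : Fin r → ℝ) (ht : ∀ i, 0 < t i) :
    (Matrix.diagonal (fun l : Fin r → Bool => Real.sqrt (∏ i, if l i then t i else 1)) *
        Bmat r t *
        Matrix.diagonal (fun l : Fin r → Bool =>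
          (Real.sqrt (∏ i, if l i then t i else 1))⁻¹)).IsSymm ∧
    ∀ z : ℂ, (((Bmat r t).map (fun x : ℝ => (x : ℂ))).charpoly.IsRoot z → z.im = 0) :=
  Bmat_conj_symm_and_eigenvalues_real_general r t ht
end

section
/- The matrix B = sI - A(s; t_1,...,t_r), with t_1,...,t_r positive reals, has exactly two eigenvalues, μ and -μ with μ = sqrt(t_1 + ... + t_r), each with algebraic (and geometric) multiplicity 2^{r-1}. -/
open Polynomial

theorem Finset.sum_mul_self_of_pairwise_anticommute {ι R : Type*} [NonUnitalNonAssocRing R]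
    (s : Finset ι) (x : ι → R) (h : (s : Set ι).Pairwise fun i j => x i * x j = -(x j * x i)) :
    (∑ i ∈ s, x i) * (∑ i ∈ s, x i) = ∑ i ∈ s, x i * x i := by
  classical
  induction s using Finset.induction_on with
  | empty => simp
  | insert a s ha ih =>
    rw [Finset.coe_insert, Set.pairwise_insert] at h
    set S := ∑ j ∈ s, x j
    have hcross : x a * S + S * x a = 0 := by
      rw [Finset.mul_sum, Finset.sum_mul, ← Finset.sum_add_distrib]
      refine Finset.sum_eq_zero fun j hj => ?_
      rw [(h.2 j hj (ne_of_mem_of_not_mem hj ha).symm).1, neg_add_cancel]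
    calc (∑ i ∈ insert a s, x i) * (∑ i ∈ insert a s, x i)
        = x a * x a + (x a * S + S * x a) + S * S := by
          rw [Finset.sum_insert ha]; simp only [add_mul, mul_add]; abel
      _ = ∑ i ∈ insert a s, x i * x i := by rw [hcross, add_zero, ih h.1, Finset.sum_insert ha]

theorem Polynomial.Monic.eq_of_sq_eq_sq {R : Type*} [CommRing R] [IsDomain R] [NeZero (2 : R)]
    {p q : R[X]} (hp : p.Monic) (hq : q.Monic) (h : p ^ 2 = q ^ 2) : p = q := by
  refine (sq_eq_sq_iff_eq_or_eq_neg.1 h).resolve_right fun hneg => two_ne_zero (α := R) ?_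
  have hlead := congrArg Polynomial.leadingCoeff hneg
  rw [hp.leadingCoeff, leadingCoeff_neg, hq.leadingCoeff] at hlead
  linear_combination hlead

namespace Matrix

section Monomial

variable {n R : Type*} [DecidableEq n]

def monomialMatrix [Zero R] (f : n → n) (w : n → R) : Matrix n n R :=
  of fun i j => if j = f i then w i else 0

theorem monomialMatrix_apply [Zero R] (f : n → n) (w : n → R) (i j : n) :
    monomialMatrix f w i j = if j = f i then w i else 0 := rfl

theorem monomialMatrix_id [Zero R] (w : n → R) : monomialMatrix id w = diagonal w := by
  ext i j
  simp [monomialMatrix_apply, diagonal_apply, eq_comm]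

theorem monomialMatrix_mul [Fintype n] [NonUnitalNonAssocSemiring R] (f g : n → n)
    (w v : n → R) :
    monomialMatrix f w * monomialMatrix g v =
      monomialMatrix (g ∘ f) fun i => w i * v (f i) := by
  ext i k
  simp only [mul_apply, monomialMatrix_apply, ite_mul, zero_mul, Finset.sum_ite_eq',
    Finset.mem_univ, if_true]
  simp only [mul_ite, mul_zero, Function.comp_apply]

theorem monomialMatrix_neg [NegZeroClass R] (f : n → n) (w : n → R) :
    monomialMatrix f (-w) = -monomialMatrix f w := by
  ext i j
  simp only [monomialMatrix_apply, neg_apply, Pi.neg_apply]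
  split_ifs <;> simp

end Monomial

variable {m n R K : Type*} [Fintype n] [CommRing R] [Field K]

theorem rank_add_le (A B : Matrix m n K) : (A + B).rank ≤ A.rank + B.rank := by
  have hrange : LinearMap.range (A + B).mulVecLin ≤
      LinearMap.range A.mulVecLin ⊔ LinearMap.range B.mulVecLin := by
    rw [mulVecLin_add]
    exact LinearMap.range_add_le _ _
  exact (Submodule.finrank_mono hrange).trans
    (Submodule.finrank_add_le_finrank_add_finrank _ _)

theorem rank_neg (A : Matrix m n R) : (-A).rank = A.rank := by
  rw [← neg_one_smul R A, rank_smul_of_mem_nonZeroDivisors]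
  exact isUnit_one.neg.mem_nonZeroDivisors

variable [DecidableEq n]

theorem rank_conj_of_mul_self_eq_one {D : Matrix n n R} (hD : D * D = 1)
    (A : Matrix n n R) : (D * A * D).rank = A.rank := by
  have hdet : IsUnit D.det := IsUnit.of_mul_eq_one D.det (by rw [← det_mul, hD, det_one])
  rw [rank_mul_eq_left_of_isUnit_det _ _ hdet, rank_mul_eq_right_of_isUnit_det _ _ hdet]

theorem charpoly_conj_of_mul_self_eq_one {D : Matrix n n R} (hD : D * D = 1)
    (A : Matrix n n R) : (D * A * D).charpoly = A.charpoly := by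
  rw [mul_assoc, charpoly_mul_comm, mul_assoc, hD, mul_one]

theorem charmatrix_mul_charmatrix_neg {M : Matrix n n R} {c : R}
    (hM : M * M = c • 1) : charmatrix M * charmatrix (-M) = scalar n (X ^ 2 - C c) := by
  have hscalar : (C : R →+* R[X]).mapMatrix (M * M) = scalar n (C c) := by
    rw [hM, smul_one_eq_diagonal]
    exact diagonal_map (map_zero _)
  have hcomm := scalar_commute (n := n) (X : R[X]) (fun _ => Commute.all _ _)
    ((C : R →+* R[X]).mapMatrix M)
  simp only [charmatrix, map_neg, sub_neg_eq_add, map_mul] at hscalar ⊢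
  rw [sub_mul, mul_add, mul_add, hcomm.eq, hscalar, map_sub, map_pow, pow_two]
  abel

theorem charpoly_mul_charpoly_neg {M : Matrix n n R} {c : R}
    (hM : M * M = c • 1) : M.charpoly * (-M).charpoly = (X ^ 2 - C c) ^ Fintype.card n := by
  rw [charpoly, charpoly, ← det_mul, charmatrix_mul_charmatrix_neg hM, scalar_apply, det_diagonal,
    Finset.prod_const, Finset.card_univ]

variable {M D : Matrix n n K} {a : K}

theorem charpoly_eq_of_mul_self_of_conj_neg [NeZero (2 : K)] {k : ℕ}
    (hcard : Fintype.card n = 2 * k) (hM : M * M = a ^ 2 • 1) (hD : D * D = 1)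
    (hDM : D * M * D = -M) :
    M.charpoly = (X - C a) ^ k * (X + C a) ^ k := by
  refine M.charpoly_monic.eq_of_sq_eq_sq
    (((monic_X_sub_C a).pow k).mul ((monic_X_add_C a).pow k)) ?_
  calc M.charpoly ^ 2 = M.charpoly * (-M).charpoly := by
        rw [← hDM, charpoly_conj_of_mul_self_eq_one hD, sq]
    _ = (X ^ 2 - C (a ^ 2)) ^ (2 * k) := by rw [charpoly_mul_charpoly_neg hM, hcard]
    _ = ((X - C a) ^ k * (X + C a) ^ k) ^ 2 := by
        rw [C_pow, sq_sub_sq, mul_comm (X + C a), mul_pow, mul_pow, ← pow_mul,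
          ← pow_mul, mul_comm k 2]

theorem rank_sub_add_rank_add_eq_card [NeZero (2 : K)] (ha : a ≠ 0) (hM : M * M = a ^ 2 • 1) :
    (M - a • 1).rank + (M + a • 1).rank = Fintype.card n := by
  refine le_antisymm (rank_add_rank_le_card_of_mul_eq_zero ?_) ?_
  · rw [sub_mul, mul_add, mul_add, hM, mul_smul_one, smul_one_mul, smul_one_mul, smul_smul, ← sq]
    abel
  · have hunit : IsUnit ((2 * a) • (1 : Matrix n n K)) := by
      rw [isUnit_iff_isUnit_det, det_smul, det_one, mul_one]
      exact (mul_ne_zero two_ne_zero ha).isUnit.pow _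
    calc Fintype.card n = ((M + a • 1) + -(M - a • 1)).rank := by
          rw [← rank_of_isUnit _ hunit]; congr 1; module
      _ ≤ (M - a • 1).rank + (M + a • 1).rank := by
          rw [add_comm (M - a • 1).rank, ← rank_neg (M - a • 1)]; exact rank_add_le _ _

theorem rank_sub_eq_rank_add_of_conj_neg (hD : D * D = 1) (hDM : D * M * D = -M) (a : K) :
    (M - a • 1).rank = (M + a • 1).rank := by
  have hconj : D * (M - a • 1) * D = -(M + a • 1) := by
    rw [mul_sub, sub_mul, hDM, mul_smul_one, smul_mul, hD, neg_add]
    abel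
  rw [← rank_conj_of_mul_self_eq_one hD, hconj, rank_neg]

end Matrix

namespace Bmat

open Matrix

variable {r : ℕ} {R : Type*} [CommRing R]

def flipAt (i : Fin r) (l : Fin r → Bool) : Fin r → Bool := Function.update l i (!l i)

theorem flipAt_apply_self (i : Fin r) (l : Fin r → Bool) : flipAt i l i = !l i := by
  simp [flipAt]

theorem flipAt_apply_of_ne {i j : Fin r} (h : j ≠ i) (l : Fin r → Bool) :
    flipAt i l j = l j := by
  simp [flipAt, h]

theorem flipAt_involutive (i : Fin r) : Function.Involutive (flipAt i) := by
  intro l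
  ext j
  rcases eq_or_ne j i with rfl | h
  · simp [flipAt_apply_self]
  · simp [flipAt_apply_of_ne h]

theorem flipAt_comp_comm (i j : Fin r) : flipAt i ∘ flipAt j = flipAt j ∘ flipAt i := by
  ext l k
  by_cases hi : k = i <;> by_cases hj : k = j <;>
    simp_all [flipAt_apply_self, flipAt_apply_of_ne]

def boolSign (b : Bool) : R := if b then -1 else 1

theorem boolSign_not (b : Bool) : boolSign (!b) = -(boolSign b : R) := by
  cases b <;> simp [boolSign]

theorem boolSign_mul_self (b : Bool) : boolSign b * boolSign b = (1 : R) := by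
  cases b <;> simp [boolSign]

theorem prod_boolSign_flipAt (s : Finset (Fin r)) (i : Fin r) (l : Fin r → Bool) :
    ∏ k ∈ s, boolSign (flipAt i l k) =
      (if i ∈ s then -1 else 1) * ∏ k ∈ s, (boolSign (l k) : R) := by
  have hupdate : (fun k => (boolSign (flipAt i l k) : R)) =
      Function.update (fun k => boolSign (l k)) i (-boolSign (l i)) := by
    funext k
    rcases eq_or_ne k i with rfl | h
    · simp [flipAt_apply_self, boolSign_not]
    · simp [flipAt_apply_of_ne h, h]
  rw [hupdate]
  split_ifs with hi
  · rw [Finset.prod_update_of_mem hi, ← Finset.mul_prod_erase s _ hi,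
      Finset.sdiff_singleton_eq_erase, neg_mul, neg_one_mul]
  · rw [Finset.prod_update_of_notMem hi, one_mul]

/-- `sign i l = (-1)^{l_{i+1}+⋯+l_r}`. -/
def sign (i : Fin r) (l : Fin r → Bool) : R := ∏ k ∈ Finset.Ioi i, boolSign (l k)

theorem neg_one_pow_card_eq_sign (i : Fin r) (l : Fin r → Bool) :
    (-1 : R) ^ (Finset.univ.filter fun j => i < j ∧ l j = true).card = sign i l := by
  simp only [sign, boolSign]
  rw [Finset.prod_ite, Finset.prod_const, Finset.prod_const_one, mul_one]
  congr 2
  ext j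
  simp

theorem sign_flipAt (i j : Fin r) (l : Fin r → Bool) :
    sign i (flipAt j l) = (if i < j then -1 else 1) * (sign i l : R) := by
  simp only [sign, prod_boolSign_flipAt, Finset.mem_Ioi]

def entry (t : Fin r → R) (i : Fin r) (l : Fin r → Bool) : R :=
  sign i l * if l i then 1 else t i

theorem sign_mul_self (i : Fin r) (l : Fin r → Bool) : sign i l * sign i l = (1 : R) := by
  rw [sign, ← Finset.prod_mul_distrib]
  exact Finset.prod_eq_one fun k _ => boolSign_mul_self (l k)

theorem entry_mul_entry_flipAt_self (t : Fin r → R) (i : Fin r) (l : Fin r → Bool) :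
    entry t i l * entry t i (flipAt i l) = t i := by
  rw [entry, entry, sign_flipAt, if_neg (lt_irrefl i), one_mul, flipAt_apply_self]
  cases l i <;> simp only [Bool.not_false, Bool.not_true, if_true, if_false, Bool.false_eq_true] <;>
    linear_combination t i * sign_mul_self (R := R) i l

theorem entry_flipAt_of_ne (t : Fin r → R) {i j : Fin r} (h : i ≠ j) (l : Fin r → Bool) :
    entry t i (flipAt j l) = (if i < j then -1 else 1) * entry t i l := by
  rw [entry, entry, sign_flipAt, flipAt_apply_of_ne h, mul_assoc]

def flipTerm (t : Fin r → R) (i : Fin r) : Matrix (Fin r → Bool) (Fin r → Bool) R :=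
  monomialMatrix (flipAt i) (entry t i)

theorem flipTerm_mul_self (t : Fin r → R) (i : Fin r) :
    flipTerm t i * flipTerm t i = t i • 1 := by
  rw [flipTerm, monomialMatrix_mul, (flipAt_involutive i).comp_self, monomialMatrix_id]
  simp_rw [entry_mul_entry_flipAt_self, smul_one_eq_diagonal]

theorem flipTerm_mul_flipTerm_of_lt (t : Fin r → R) {i j : Fin r} (h : i < j) :
    flipTerm t i * flipTerm t j = -(flipTerm t j * flipTerm t i) := by
  rw [flipTerm, flipTerm, monomialMatrix_mul, monomialMatrix_mul, flipAt_comp_comm,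
    ← monomialMatrix_neg]
  congr 1
  funext l
  simp only [entry_flipAt_of_ne t h.ne', entry_flipAt_of_ne t h.ne, h, not_lt_of_gt h, if_true,
    if_false, Pi.neg_apply]
  ring

theorem eq_sum_flipTerm (t : Fin r → R) : Bmat r t = ∑ i, flipTerm t i := by
  ext l l'
  simp only [Bmat, Amat, Matrix.neg_apply, Matrix.sum_apply, flipTerm, monomialMatrix_apply, entry,
    flipAt, neg_one_pow_card_eq_sign, ite_self, zero_add, ← Finset.sum_neg_distrib]
  refine Finset.sum_congr rfl fun i _ => ?_
  by_cases h : l' = Function.update l i !l i <;> simp only [h, if_true, if_false, neg_zero]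
  ring

theorem mul_self (t : Fin r → R) : Bmat r t * Bmat r t = (∑ i, t i) • 1 := by
  rw [eq_sum_flipTerm, Finset.sum_mul_self_of_pairwise_anticommute, Finset.sum_smul]
  · simp_rw [flipTerm_mul_self]
  · intro i _ j _ hij
    rcases hij.lt_or_gt with h | h
    · exact flipTerm_mul_flipTerm_of_lt t h
    · exact neg_eq_iff_eq_neg.1 (flipTerm_mul_flipTerm_of_lt t h).symm

def parity (l : Fin r → Bool) : R := ∏ k, boolSign (l k)

theorem parity_flipAt (i : Fin r) (l : Fin r → Bool) : parity (flipAt i l) = -(parity l : R) := by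
  rw [parity, prod_boolSign_flipAt, if_pos (Finset.mem_univ i), neg_one_mul, parity]

theorem parity_mul_self (l : Fin r → Bool) : parity l * parity l = (1 : R) := by
  rw [parity, ← Finset.prod_mul_distrib]
  exact Finset.prod_eq_one fun k _ => boolSign_mul_self (l k)

def parityMatrix (r : ℕ) : Matrix (Fin r → Bool) (Fin r → Bool) R := diagonal parity

theorem parityMatrix_mul_self : parityMatrix r * parityMatrix r = (1 : Matrix _ _ R) := by
  rw [parityMatrix, diagonal_mul_diagonal]
  simp_rw [parity_mul_self]
  exact diagonal_one

theorem parityMatrix_conj_flipTerm (t : Fin r → R) (i : Fin r) :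
    parityMatrix r * flipTerm t i * parityMatrix r = -flipTerm t i := by
  rw [parityMatrix, ← monomialMatrix_id, flipTerm, monomialMatrix_mul, monomialMatrix_mul,
    ← monomialMatrix_neg]
  congr 1
  funext l
  simp only [id, Function.comp_apply, parity_flipAt, Pi.neg_apply]
  linear_combination (-entry t i l) * parity_mul_self (R := R) l

theorem parityMatrix_conj (t : Fin r → R) :
    parityMatrix r * Bmat r t * parityMatrix r = -Bmat r t := by
  rw [eq_sum_flipTerm, Finset.mul_sum, Finset.sum_mul, ← Finset.sum_neg_distrib]
  exact Finset.sum_congr rfl fun i _ => parityMatrix_conj_flipTerm t i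

end Bmat

open Polynomial in
theorem Bmat_eigenvalues (r : ℕ) (hr : 1 < r) (t : Fin r → ℝ) (ht : ∀ i, 0 < t i) :
    (Bmat r t).charpoly =
        (X - C (Real.sqrt (∑ i, t i))) ^ 2 ^ (r - 1) *
          (X + C (Real.sqrt (∑ i, t i))) ^ 2 ^ (r - 1) ∧
    (Bmat r t - Real.sqrt (∑ i, t i) •
        (1 : Matrix (Fin r → Bool) (Fin r → Bool) ℝ)).rank = 2 ^ (r - 1) ∧
    (Bmat r t + Real.sqrt (∑ i, t i) •
        (1 : Matrix (Fin r → Bool) (Fin r → Bool) ℝ)).rank = 2 ^ (r - 1) := by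
  have hpos : 0 < ∑ i, t i := Finset.sum_pos (fun i _ => ht i) ⟨⟨0, by omega⟩, Finset.mem_univ _⟩
  have hsq : Bmat r t * Bmat r t = Real.sqrt (∑ i, t i) ^ 2 • 1 := by
    rw [Real.sq_sqrt hpos.le, Bmat.mul_self]
  have hcard : Fintype.card (Fin r → Bool) = 2 * 2 ^ (r - 1) := by
    rw [Fintype.card_fun, Fintype.card_bool, Fintype.card_fin, ← pow_succ',
      Nat.sub_add_cancel hr.le]
  have hD := Bmat.parityMatrix_mul_self (r := r) (R := ℝ)
  have hconj := Bmat.parityMatrix_conj t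
  have hsum := Matrix.rank_sub_add_rank_add_eq_card (Real.sqrt_pos.2 hpos).ne' hsq
  have hsymm := Matrix.rank_sub_eq_rank_add_of_conj_neg hD hconj (Real.sqrt (∑ i, t i))
  exact ⟨Matrix.charpoly_eq_of_mul_self_of_conj_neg hcard hsq hD hconj, by omega, by omega⟩
end

section
/- For r = 3, the 8×8 matrix A(s; t_1, t_2, t_3) given explicitly in block form as [[A(s;t_1,t_2), -t_3 I_4], [-I_4, -A(-s;t_1,t_2)]] has determinant (s^2 - t_1 - t_2 - t_3)^4, where A(s;t_1,t_2) is the 4×4 matrix with rows [s, -t_1, -t_2, 0], [-1, s, 0, -t_2], [-1, 0, s, t_1], [0, -1, 1, s]. -/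
open Matrix

section Aux
variable {R : Type*} [CommRing R]

lemma aux_det_antidiag (X C : Matrix (Fin 4) (Fin 4) R) :
    (fromBlocks 0 X C 0).det = C.det * X.det := by
  have h : (fromBlocks 0 X C 0 : Matrix _ _ R) =
      (fromBlocks C 0 0 X).submatrix (Equiv.sumComm (Fin 4) (Fin 4)) id := by
    ext (i | i) (j | j) <;> rfl
  rw [h, Matrix.det_permute, Matrix.det_fromBlocks_zero₁₂]
  have hs : Equiv.Perm.sign (Equiv.sumComm (Fin 4) (Fin 4)) = 1 := by decide
  rw [hs]
  simp

set_option maxHeartbeats 1000000 in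
lemma aux_X (s t₁ t₂ t₃ : R) :
    (-t₃ • (1 : Matrix (Fin 4) (Fin 4) R)) +
      !![s, -t₁, -t₂, 0; -1, s, 0, -t₂; -1, 0, s, t₁; 0, -1, 1, s] *
      (-(!![-s, -t₁, -t₂, 0; -1, -s, 0, -t₂; -1, 0, -s, t₁; 0, -1, 1, -s])) =
    (s ^ 2 - t₁ - t₂ - t₃) • (1 : Matrix (Fin 4) (Fin 4) R) := by
  ext i j
  fin_cases i <;> fin_cases j <;>
    simp [Matrix.mul_apply, Fin.sum_univ_succ, Matrix.one_apply] <;> first | rfl | ring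

end Aux

set_option maxHeartbeats 1000000 in
theorem det_Amat_r3 {R : Type*} [CommRing R] (s t₁ t₂ t₃ : R) :
    (Matrix.fromBlocks
        !![s, -t₁, -t₂, 0;
           -1, s, 0, -t₂;
           -1, 0, s, t₁;
           0, -1, 1, s]
        (-t₃ • (1 : Matrix (Fin 4) (Fin 4) R))
        (-1 : Matrix (Fin 4) (Fin 4) R)
        (-(!![-s, -t₁, -t₂, 0;
              -1, -s, 0, -t₂;
              -1, 0, -s, t₁;
              0, -1, 1, -s]))).det = (s ^ 2 - t₁ - t₂ - t₃) ^ 4 := by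
  set A : Matrix (Fin 4) (Fin 4) R :=
    !![s, -t₁, -t₂, 0; -1, s, 0, -t₂; -1, 0, s, t₁; 0, -1, 1, s] with hA
  set D : Matrix (Fin 4) (Fin 4) R :=
    -(!![-s, -t₁, -t₂, 0; -1, -s, 0, -t₂; -1, 0, -s, t₁; 0, -1, 1, -s]) with hD
  set B : Matrix (Fin 4) (Fin 4) R := -t₃ • 1 with hB
  set M := fromBlocks A B (-1 : Matrix (Fin 4) (Fin 4) R) D with hM
  have key : fromBlocks (1 : Matrix (Fin 4) (Fin 4) R) A (0 : Matrix (Fin 4) (Fin 4) R)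
        (1 : Matrix (Fin 4) (Fin 4) R) * M *
      fromBlocks (1 : Matrix (Fin 4) (Fin 4) R) D (0 : Matrix (Fin 4) (Fin 4) R)
        (1 : Matrix (Fin 4) (Fin 4) R) =
      fromBlocks (0 : Matrix (Fin 4) (Fin 4) R) (B + A * D)
        (-1 : Matrix (Fin 4) (Fin 4) R) (0 : Matrix (Fin 4) (Fin 4) R) := by
    rw [hM, Matrix.fromBlocks_multiply, Matrix.fromBlocks_multiply]
    simp only [Matrix.one_mul, Matrix.mul_one, Matrix.zero_mul, Matrix.mul_zero, add_zero,
      zero_add, Matrix.mul_neg, Matrix.mul_one, Matrix.neg_mul, add_neg_cancel, neg_add_cancel,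
      Matrix.zero_mul]
  have hdet : M.det = (fromBlocks (0 : Matrix (Fin 4) (Fin 4) R) (B + A * D)
      (-1 : Matrix (Fin 4) (Fin 4) R) (0 : Matrix (Fin 4) (Fin 4) R)).det := by
    have h2 := congrArg Matrix.det key
    rwa [Matrix.det_mul, Matrix.det_mul, Matrix.det_fromBlocks_zero₂₁,
      Matrix.det_fromBlocks_zero₂₁, Matrix.det_one, one_mul, one_mul, mul_one] at h2
  have hX : B + A * D = (s ^ 2 - t₁ - t₂ - t₃) • (1 : Matrix (Fin 4) (Fin 4) R) := by
    rw [hA, hB, hD]; exact aux_X s t₁ t₂ t₃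
  rw [hdet, hX, aux_det_antidiag]
  have hC : ((-1 : Matrix (Fin 4) (Fin 4) R)).det = 1 := by
    rw [show (-1 : Matrix (Fin 4) (Fin 4) R) = (-1 : R) • 1 by simp, Matrix.det_smul,
      Matrix.det_one]
    norm_num
  rw [hC, one_mul, Matrix.det_smul, Matrix.det_one, mul_one]
  norm_num
end

section
/- For a positive real p and nonnegative integers k ≤ l, with v_k and w_k basis vectors satisfying the q(2) lowering relations, the Hermitian form values are ⟨v_k | v_l⟩ = δ_{kl} k! p(p-1)⋯(p-k+1), ⟨w_k | w_l⟩ = δ_{kl} (k-1)! p(p-1)⋯(p-k+1), and ⟨v_k | w_l⟩ = δ_{kl} k! p(p-1)⋯(p-k+1)/√p. -/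
open Finset in
/-- The values of the Hermitian form on the basis vectors `v_k`, `w_k` of the
`q(2)` module `V̄_p`.  Here `B` is a sesquilinear Hermitian form with
`⟨v_0|v_0⟩ = 1` for which `b^-` (resp. `f^-`) is adjoint to `b^+` (resp. `f^+`),
and the operators act by the `q(2)` raising/lowering relations; `w 0` is a
dummy vector (it only ever occurs with coefficient `0`). -/
theorem q2_form_values (p : ℝ) (hp : 0 < p)
    {V : Type*} [AddCommGroup V] [Module ℂ V]
    (v w : ℕ → V) (bp bm fp fm : V →ₗ[ℂ] V)
    (B : V →ₗ⋆[ℂ] V →ₗ[ℂ] ℂ)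
    (hbpv : ∀ k, bp (v k) = v (k + 1))
    (hbpw : ∀ k, bp (w (k + 1)) = w (k + 2))
    (hfpv : ∀ k, fp (v k) = w (k + 1))
    (hfpw : ∀ k, fp (w (k + 1)) = 0)
    (hbmv0 : bm (v 0) = 0) (hfmv0 : fm (v 0) = 0)
    (hbmv : ∀ k : ℕ, bm (v (k + 1)) = (((k : ℂ) + 1) * ((p : ℂ) - k)) • v k)
    (hfmv : ∀ k : ℕ, fm (v (k + 1)) =
      (((k : ℂ) + 1) * (Real.sqrt p : ℂ)) • v k - (((k : ℂ) + 1) * k) • w k)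
    (hbmw : ∀ k : ℕ, bm (w (k + 1)) =
      (Real.sqrt p : ℂ) • v k + ((k : ℂ) * ((p : ℂ) - (k + 1))) • w k)
    (hfmw : ∀ k : ℕ, fm (w (k + 1)) = (p : ℂ) • v k - ((k : ℂ) * (Real.sqrt p : ℂ)) • w k)
    (hB0 : B (v 0) (v 0) = 1)
    (hadjb : ∀ x y, B (bp x) y = B x (bm y))
    (hadjf : ∀ x y, B (fp x) y = B x (fm y))
    (hherm : ∀ x y, B x y = starRingEnd ℂ (B y x)) :
    ∀ k l : ℕ, k ≤ l →
      (B (v k) (v l) =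
        if k = l then (k.factorial : ℂ) * ∏ i ∈ range k, ((p : ℂ) - i) else 0) ∧
      (1 ≤ k → B (w k) (w l) =
        if k = l then ((k - 1).factorial : ℂ) * ∏ i ∈ range k, ((p : ℂ) - i) else 0) ∧
      (1 ≤ l → B (v k) (w l) =
        if k = l then (k.factorial : ℂ) * (∏ i ∈ range k, ((p : ℂ) - i)) / (Real.sqrt p : ℂ)
        else 0) := by
  have hsp : (Real.sqrt p : ℂ) ≠ 0 := by
    exact_mod_cast (Real.sqrt_pos.mpr hp).ne'
  have hsq : (Real.sqrt p : ℂ) * (Real.sqrt p : ℂ) = (p : ℂ) := by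
    norm_cast
    exact Real.mul_self_sqrt hp.le
  intro k l hkl
  induction k generalizing l with
  | zero =>
    have hvv0 : ∀ n, B (v (n + 1)) (v 0) = 0 := fun n => by
      rw [← hbpv n, hadjb, hbmv0, map_zero]
    have hwv0 : ∀ n, B (w (n + 1)) (v 0) = 0 := fun n => by
      rw [← hfpv n, hadjf, hfmv0, map_zero]
    refine ⟨?_, by omega, ?_⟩
    · rcases l with _ | m
      · simpa using hB0
      · rw [hherm, hvv0, map_zero, if_neg (by omega)]
    · intro hl
      rcases l with _ | m
      · omega
      · rw [hherm, hwv0, map_zero, if_neg (by omega)]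
  | succ k ih =>
    obtain ⟨m, rfl⟩ : ∃ m, l = m + 1 := ⟨l - 1, by omega⟩
    have hkm : k ≤ m := by omega
    rcases Nat.eq_zero_or_pos m with rfl | hm
    · have hk0 : k = 0 := by omega
      subst hk0
      refine ⟨?_, fun _ => ?_, fun _ => ?_⟩
      · rw [← hbpv 0, hadjb, hbpv 0, hbmv 0, map_smul, smul_eq_mul, hB0, if_pos rfl]
        simp [Finset.prod_range_succ]
      · rw [← hfpv 0, hadjf, hfpv 0, hfmw 0, map_sub, map_smul, map_smul, smul_eq_mul,
          smul_eq_mul, hB0, if_pos rfl]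
        simp [Finset.prod_range_succ]
      · rw [← hbpv 0, hadjb, hbmw 0, map_add, map_smul, map_smul, smul_eq_mul,
          smul_eq_mul, hB0, if_pos rfl]
        simp [Finset.prod_range_succ]
        field_simp
        linear_combination hsq
    · have IH := ih m hkm
      have ivv := IH.1
      have ivw := IH.2.2 hm
      refine ⟨?_, fun _ => ?_, fun _ => ?_⟩
      · rw [← hbpv k, hadjb, hbmv m, map_smul, smul_eq_mul, ivv]
        rcases eq_or_lt_of_le hkm with rfl | hlt
        · rw [if_pos rfl, if_pos rfl, Finset.prod_range_succ, Nat.factorial_succ]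
          push_cast
          ring
        · rw [if_neg hlt.ne, if_neg (by omega), mul_zero]
      · rw [← hfpv k, hadjf, hfmw m, map_sub, map_smul, map_smul, smul_eq_mul,
          smul_eq_mul, ivv, ivw]
        rcases eq_or_lt_of_le hkm with rfl | hlt
        · rw [if_pos rfl, if_pos rfl, if_pos rfl]
          simp only [Nat.add_sub_cancel, Finset.prod_range_succ]
          field_simp
        · rw [if_neg hlt.ne, if_neg hlt.ne, if_neg (by omega), mul_zero, mul_zero,
            sub_zero]
      · rw [← hbpv k, hadjb, hbmw m, map_add, map_smul, map_smul, smul_eq_mul,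
          smul_eq_mul, ivv, ivw]
        rcases eq_or_lt_of_le hkm with rfl | hlt
        · rw [if_pos rfl, if_pos rfl, if_pos rfl, Finset.prod_range_succ,
            Nat.factorial_succ]
          field_simp
          push_cast
          linear_combination (((k.factorial : ℕ) : ℂ) * ∏ i ∈ range k, ((p : ℂ) - i)) * hsq
        · rw [if_neg hlt.ne, if_neg hlt.ne, if_neg (by omega), mul_zero, mul_zero,
            add_zero]
end

section
/- In the q(2) module V̄_p with p a positive integer, the vector v_p - √p · w_p is, up to scalar, the unique weight vector of the form v_k + β w_k (k ≥ 1, β ∈ ℂ) annihilated by both b^- and f^-: the conditions b^-(v_k + β w_k) = 0 and f^-(v_k + β w_k) = 0 hold if and only if k = p and β = -√p. -/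
lemma pair_aux {V : Type*} [AddCommGroup V] [Module ℂ V] {ι : Type*} {f : ι → V}
    (hf : LinearIndependent ℂ f) {i j : ι} (hij : i ≠ j) {a b : ℂ}
    (h : a • f i + b • f j = 0) : a = 0 ∧ b = 0 := by
  have hinj : Function.Injective ![i, j] := by
    intro x y hxy
    fin_cases x <;> fin_cases y <;> simp_all
  have h2 := hf.comp ![i, j] hinj
  have h3 : LinearIndependent ℂ ![f i, f j] := by
    convert h2 using 1
    ext x; fin_cases x <;> simp
  exact LinearIndependent.pair_iff.mp h3 a b h

/-- In the `q(2)` module `V̄_p` (`p` a positive integer), a weight vector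
`v_k + β w_k` (`k ≥ 1`) is annihilated by both `b^-` and `f^-` iff `k = p`
and `β = -√p`; i.e. `v_p - √p · w_p` is, up to scalar, the unique such
primitive vector.  The vectors `v_k` (`k ≥ 0`) and `w_k` (`k ≥ 1`) are
linearly independent and `w 0` is a dummy vector occurring only with
coefficient `0`. -/
theorem q2_primitive_vector_unique (p : ℕ) (hp : 0 < p)
    {V : Type*} [AddCommGroup V] [Module ℂ V]
    (v w : ℕ → V)
    (hli : LinearIndependent ℂ (Sum.elim v (fun k : ℕ => w (k + 1))))
    (bm fm : V →ₗ[ℂ] V)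
    (hbmv : ∀ k : ℕ, bm (v (k + 1)) = (((k : ℂ) + 1) * ((p : ℂ) - k)) • v k)
    (hfmv : ∀ k : ℕ, fm (v (k + 1)) =
      (((k : ℂ) + 1) * (Real.sqrt p : ℂ)) • v k - (((k : ℂ) + 1) * k) • w k)
    (hbmw : ∀ k : ℕ, bm (w (k + 1)) =
      (Real.sqrt p : ℂ) • v k + ((k : ℂ) * ((p : ℂ) - (k + 1))) • w k)
    (hfmw : ∀ k : ℕ, fm (w (k + 1)) =
      (p : ℂ) • v k - ((k : ℂ) * (Real.sqrt p : ℂ)) • w k) :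
    ∀ (k : ℕ) (β : ℂ),
      (bm (v (k + 1) + β • w (k + 1)) = 0 ∧ fm (v (k + 1) + β • w (k + 1)) = 0) ↔
        (k + 1 = p ∧ β = -(Real.sqrt p : ℂ)) := by
  intro k β
  set s : ℂ := (Real.sqrt p : ℂ) with hs
  have hs2 : s * s = (p : ℂ) := by
    rw [hs]; norm_cast
    exact Real.mul_self_sqrt (Nat.cast_nonneg p)
  have hs0 : s ≠ 0 := by
    rw [hs]
    simp only [ne_eq, Complex.ofReal_eq_zero]
    positivity
  have hb : bm (v (k + 1) + β • w (k + 1)) =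
      (((k : ℂ) + 1) * ((p : ℂ) - k) + β * s) • v k +
        (β * ((k : ℂ) * ((p : ℂ) - (k + 1)))) • w k := by
    rw [map_add, map_smul, hbmv, hbmw]
    module
  have hf : fm (v (k + 1) + β • w (k + 1)) =
      (((k : ℂ) + 1) * s + β * p) • v k +
        (-(((k : ℂ) + 1) * k) - β * ((k : ℂ) * s)) • w k := by
    rw [map_add, map_smul, hfmv, hfmw]
    module
  constructor
  · rintro ⟨h1, h2⟩
    rw [hb] at h1
    rw [hf] at h2
    rcases k with _ | m
    · -- k = 0
      simp only [Nat.cast_zero, zero_mul, mul_zero, zero_smul, add_zero, neg_zero,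
        zero_sub, zero_add, sub_zero, smul_zero, neg_smul] at h1 h2
      have hv0 : v 0 ≠ 0 := by
        have := hli.ne_zero (Sum.inl 0)
        simpa using this
      have e1 : (0 + 1) * ((p : ℂ) - 0) + β * s = 0 := by
        by_contra hne
        rw [smul_eq_zero] at h1
        refine hv0 (h1.resolve_left ?_)
        intro h; apply hne; linear_combination h
      have e2 : (0 + 1) * s + β * (p : ℂ) = 0 := by
        by_contra hne
        rw [smul_eq_zero] at h2
        refine hv0 (h2.resolve_left ?_)
        intro h; apply hne; linear_combination h
      have hpc0 : (p : ℂ) ≠ 0 := Nat.cast_ne_zero.mpr hp.ne'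
      have hp1 : (p : ℂ) * ((p : ℂ) - 1) = 0 := by
        linear_combination (p : ℂ) * e1 - s * e2 + hs2
      have hpc1 : (p : ℂ) = 1 := by
        rcases mul_eq_zero.mp hp1 with h | h
        · exact absurd h hpc0
        · linear_combination h
      constructor
      · have : p = 1 := by exact_mod_cast hpc1
        omega
      · linear_combination s * e1 - β * hs2 - (β + s) * hpc1
    · -- k = m + 1
      have hne1 : (Sum.inl (m + 1) : ℕ ⊕ ℕ) ≠ Sum.inr m := by simp
      obtain ⟨eA1, eB1⟩ := pair_aux hli hne1
        (by simpa only [Sum.elim_inl, Sum.elim_inr] using h1)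
      obtain ⟨eA2, eB2⟩ := pair_aux hli hne1
        (by simpa only [Sum.elim_inl, Sum.elim_inr] using h2)
      push_cast at eA1 eB1 eA2 eB2
      have hK : ((m : ℂ) + 1) ≠ 0 := Nat.cast_add_one_ne_zero m
      have hK2 : ((m : ℂ) + 1 + 1) ≠ 0 := by
        have := Nat.cast_add_one_ne_zero (R := ℂ) (m + 1)
        push_cast at this
        convert this using 2
      have e4 : ((m : ℂ) + 1 + 1) + β * s = 0 := by
        have h0 : (((m : ℂ) + 1 + 1) + β * s) * ((m : ℂ) + 1) = 0 := by
          linear_combination -eB2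
        exact (mul_eq_zero.mp h0).resolve_right hK
      have hpK : (p : ℂ) = (m : ℂ) + 1 + 1 := by
        have h0 : ((m : ℂ) + 1 + 1) * ((p : ℂ) - ((m : ℂ) + 1 + 1)) = 0 := by
          linear_combination eA1 - e4
        have := (mul_eq_zero.mp h0).resolve_left hK2
        linear_combination this
      constructor
      · have : ((m + 2 : ℕ) : ℂ) = (p : ℂ) := by push_cast; linear_combination -hpK
        have : m + 2 = p := Nat.cast_injective this
        omega
      · have h0 : (β + s) * s = 0 := by
          linear_combination e4 + hs2 + hpK
        have := (mul_eq_zero.mp h0).resolve_right hs0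
        linear_combination this
  · rintro ⟨hkp, hβ⟩
    have hpc : (p : ℂ) = (k : ℂ) + 1 := by
      rw [← hkp]; push_cast; ring
    subst hβ
    constructor
    · rw [hb]
      have c1 : ((k : ℂ) + 1) * ((p : ℂ) - k) + (-s) * s = 0 := by
        linear_combination (k : ℂ) * hpc - hs2
      have c2 : (-s) * ((k : ℂ) * ((p : ℂ) - (k + 1))) = 0 := by
        linear_combination -s * (k : ℂ) * hpc
      rw [c1, c2, zero_smul, zero_smul, add_zero]
    · rw [hf]
      have c1 : ((k : ℂ) + 1) * s + (-s) * (p : ℂ) = 0 := by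
        linear_combination -s * hpc
      have c2 : (-(((k : ℂ) + 1) * k) - (-s) * ((k : ℂ) * s)) = 0 := by
        linear_combination (k : ℂ) * hs2 + (k : ℂ) * hpc
      rw [c1, c2, zero_smul, zero_smul, add_zero]
end
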